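/- Let c' : Fin 6 → Fin 6 → Fin 5 be any proper edge-colouring of K₆, i.e., c' i j = c' j i for all i ≠ j, and for any vertex i and distinct vertices j, k both different from i one has c' i j ≠ c' i k. Then there exist a permutation φ ∈ Equiv.Perm (Fin 6) and a permutation σ ∈ Equiv.Perm (Fin 5) such that c' (φ i) (φ j) = σ (c i j) for all i ≠ j. (The edge labelling of K₆ by five labels in which each label class is a perfect matching is unique up to a permutation of the labels and of the vertices.) -/

import Mathlib

/-- The 1-factorization of `K₆`: the edge `{i, j}` of the complete graph on
`Fin 6` gets the colour `(i + j) mod 5` if `i, j ≤ 4`, and the edge `{i, 5}`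
gets the colour `(2 * i) mod 5`. -/
def c (i j : Fin 6) : Fin 5 :=
  if i.val = 5 then (Fin.ofNat 5 (2 * j.val : ℕ))
  else if j.val = 5 then (Fin.ofNat 5 (2 * i.val : ℕ))
  else (Fin.ofNat 5 (i.val + j.val : ℕ))

/-!
In a proper colouring of `K₆` with five colours every colour occurs exactly once at each vertex,
so each colour class is a perfect matching, whose third edge is forced once two of its edges are
known. Hence two such colourings that agree on the stars of two vertices `u, v` agree on every
colour class other than that of `uv`, and so everywhere. After permuting colours, the star of `5`
is coloured as in `c`; then `d 0 j = d 5 l` defines a derangement `j ↦ l` of `{1, 2, 3, 4}`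
without 2-cycles (a 2-cycle would force two colours onto the remaining pair), i.e. a 4-cycle, and
each of the six 4-cycles is realised by a vertex permutation of `c` fixing the colours of the star
of `5`.
-/

open Function

theorem List.Nodup.mem_of_length_eq_card {V : Type*} [Fintype V] [DecidableEq V] {l : List V}
    (hl : l.Nodup) (hlen : l.length = Fintype.card V) (w : V) : w ∈ l := by
  have huniv : l.toFinset = Finset.univ :=
    Finset.eq_univ_of_card _ (by rw [List.toFinset_card_of_nodup hl, hlen])
  rw [← List.mem_toFinset, huniv]
  exact Finset.mem_univ w

theorem Fin.exists_nodup_extend :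
    ∀ a b c d : Fin 6, [a, b, c, d].Nodup → ∃ m n, [a, b, c, d, m, n].Nodup := by
  decide

def IsProperColouring {V α : Type*} (d : V → V → α) : Prop :=
  (∀ i j, i ≠ j → d i j = d j i) ∧ ∀ i j k, j ≠ i → k ≠ i → j ≠ k → d i j ≠ d i k

namespace IsProperColouring

section General

variable {V α : Type*} {d e : V → V → α}

theorem comm (hd : IsProperColouring d) {i j : V} (h : i ≠ j) : d i j = d j i :=
  hd.1 i j h

theorem eq_of_apply_eq (hd : IsProperColouring d) {i j k : V} (hj : j ≠ i) (hk : k ≠ i)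
    (h : d i j = d i k) : j = k := by
  by_contra hjk
  exact hd.2 i j k hj hk hjk h

theorem apply_ne_apply_left (hd : IsProperColouring d) {u v j : V} (hu : u ≠ j) (hv : v ≠ j)
    (huv : u ≠ v) : d u j ≠ d v j := by
  rw [hd.comm hu, hd.comm hv]
  exact hd.2 j u v hu hv huv

theorem apply_ne_of_apply_eq (hd : IsProperColouring d) {w p j : V} {a : α} (hjw : j ≠ w)
    (hpw : p ≠ w) (hjp : j ≠ p) (hp : d w p = a) : d j w ≠ a := by
  rw [hd.comm hjw, ← hp]
  exact hd.2 w j p hjw hpw hjp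

theorem map {β : Type*} (hd : IsProperColouring d) {σ : α → β} (hσ : Injective σ) :
    IsProperColouring (fun i j => σ (d i j)) :=
  ⟨fun i j h => congrArg σ (hd.1 i j h), fun i j k hj hk hjk h => hd.2 i j k hj hk hjk (hσ h)⟩

theorem comap {W : Type*} (hd : IsProperColouring d) {ψ : W → V} (hψ : Injective ψ) :
    IsProperColouring (fun i j => d (ψ i) (ψ j)) :=
  ⟨fun _ _ h => hd.1 _ _ (hψ.ne h),
    fun _ _ _ hj hk hjk => hd.2 _ _ _ (hψ.ne hj) (hψ.ne hk) (hψ.ne hjk)⟩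

variable [Fintype V] [Fintype α]

theorem star_bijective (hcard : Fintype.card α + 1 = Fintype.card V) (hd : IsProperColouring d)
    (v : V) : Bijective (fun w : {w // w ≠ v} => d v w) := by
  classical
  refine (Fintype.bijective_iff_injective_and_card _).2 ⟨fun w w' h => ?_, ?_⟩
  · exact Subtype.ext (hd.eq_of_apply_eq w.2 w'.2 h)
  · rw [Fintype.card_subtype_compl, Fintype.card_subtype_eq]
    omega

theorem exists_apply_eq (hcard : Fintype.card α + 1 = Fintype.card V) (hd : IsProperColouring d)
    (v : V) (a : α) : ∃ w, w ≠ v ∧ d v w = a := by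
  obtain ⟨w, hw⟩ := (hd.star_bijective hcard v).2 a
  exact ⟨w, w.2, hw⟩

theorem exists_perm_apply_eq (hcard : Fintype.card α + 1 = Fintype.card V)
    (hd : IsProperColouring d) (he : IsProperColouring e) (v : V) :
    ∃ σ : Equiv.Perm α, ∀ w, w ≠ v → σ (e v w) = d v w := by
  let starE := Equiv.ofBijective _ (he.star_bijective hcard v)
  let starD := Equiv.ofBijective _ (hd.star_bijective hcard v)
  refine ⟨starE.symm.trans starD, fun w hw => ?_⟩
  change starD (starE.symm (starE ⟨w, hw⟩)) = d v w
  rw [Equiv.symm_apply_apply]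
  rfl

end General

variable {d e : Fin 6 → Fin 6 → Fin 5}

theorem apply_eq_of_apply_eq_of_apply_eq (hd : IsProperColouring d) {u x v y j k : Fin 6}
    {a : Fin 5} (hnd : [u, x, v, y, j, k].Nodup) (hux : d u x = a) (hvy : d v y = a) :
    d j k = a := by
  obtain ⟨w, hwj, hjw⟩ := hd.exists_apply_eq rfl j a
  have hw := hnd.mem_of_length_eq_card rfl w
  simp only [List.nodup_cons, List.mem_cons, List.not_mem_nil, or_false, not_or] at hnd hw
  obtain ⟨⟨hux', -, -, huj, -⟩, ⟨-, -, hxj, -⟩, ⟨hvy', hvj, -⟩, ⟨hyj, -⟩, -⟩ := hnd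
  have hxu : d x u = a := (hd.comm (Ne.symm hux')).trans hux
  have hyv : d y v = a := (hd.comm (Ne.symm hvy')).trans hvy
  rcases hw with rfl | rfl | rfl | rfl | rfl | rfl
  · exact absurd hjw (hd.apply_ne_of_apply_eq (Ne.symm huj) (Ne.symm hux') (Ne.symm hxj) hux)
  · exact absurd hjw (hd.apply_ne_of_apply_eq (Ne.symm hxj) hux' (Ne.symm huj) hxu)
  · exact absurd hjw (hd.apply_ne_of_apply_eq (Ne.symm hvj) (Ne.symm hvy') (Ne.symm hyj) hvy)
  · exact absurd hjw (hd.apply_ne_of_apply_eq (Ne.symm hyj) hvy' (Ne.symm hvj) hyv)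
  · exact absurd rfl hwj
  · exact hjw

theorem apply_ne_of_apply_eq_swap (hd : IsProperColouring d) {u j v l : Fin 6}
    (hnd : [u, j, v, l].Nodup) (h : d u j = d v l) : d u l ≠ d v j := by
  intro h'
  obtain ⟨m, n, hmn⟩ := Fin.exists_nodup_extend u j v l hnd
  have hmn' : [u, l, v, j, m, n].Nodup := (List.Perm.nodup_iff (by grind)).1 hmn
  have hj : d m n = d u j := hd.apply_eq_of_apply_eq_of_apply_eq hmn rfl h.symm
  have hl : d m n = d u l := hd.apply_eq_of_apply_eq_of_apply_eq hmn' rfl h'.symm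
  simp only [List.nodup_cons, List.mem_cons, List.not_mem_nil, or_false, not_or] at hnd
  obtain ⟨⟨huj, -, hul⟩, ⟨-, hjl⟩, -⟩ := hnd
  exact hjl (hd.eq_of_apply_eq (Ne.symm huj) (Ne.symm hul) (hj.symm.trans hl))

theorem apply_eq_of_eqOn_stars_of_ne (hd : IsProperColouring d) (he : IsProperColouring e)
    {u v j k : Fin 6} (hu : ∀ w, w ≠ u → d u w = e u w) (hv : ∀ w, w ≠ v → d v w = e v w)
    (hnd : [u, v, j, k].Nodup) (hne : d j k ≠ d u v) : e j k = d j k := by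
  obtain ⟨x, hxu, hux⟩ := hd.exists_apply_eq rfl u (d j k)
  obtain ⟨y, hyv, hvy⟩ := hd.exists_apply_eq rfl v (d j k)
  simp only [List.nodup_cons, List.mem_cons, List.not_mem_nil, or_false, not_or] at hnd
  obtain ⟨⟨huv, huj, huk⟩, ⟨hvj, hvk⟩, hjk, -⟩ := hnd
  have hxv : x ≠ v := by rintro rfl; exact hne hux.symm
  have hxj : x ≠ j := by
    rintro rfl; exact hd.apply_ne_of_apply_eq huj (Ne.symm hjk) huk rfl hux
  have hxk : x ≠ k := by
    rintro rfl; exact hd.apply_ne_of_apply_eq huk hjk huj (hd.comm (Ne.symm hjk)) hux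
  have hyu : y ≠ u := by rintro rfl; exact hne ((hd.comm huv).trans hvy).symm
  have hyx : y ≠ x := by
    rintro rfl
    exact hd.apply_ne_of_apply_eq (Ne.symm hxv) (Ne.symm hxu) (Ne.symm huv)
      ((hd.comm hxu).trans hux) hvy
  have hyj : y ≠ j := by
    rintro rfl; exact hd.apply_ne_of_apply_eq hvj (Ne.symm hjk) hvk rfl hvy
  have hyk : y ≠ k := by
    rintro rfl; exact hd.apply_ne_of_apply_eq hvk hjk hvj (hd.comm (Ne.symm hjk)) hvy
  have hnd' : [u, x, v, y, j, k].Nodup := by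
    simp only [List.nodup_cons, List.mem_cons, List.not_mem_nil, or_false, not_or]
    grind
  exact he.apply_eq_of_apply_eq_of_apply_eq hnd' ((hu x hxu).symm.trans hux)
    ((hv y hyv).symm.trans hvy)

theorem eq_of_eqOn_two_stars (hd : IsProperColouring d) (he : IsProperColouring e) {u v : Fin 6}
    (huv : u ≠ v) (hu : ∀ w, w ≠ u → d u w = e u w) (hv : ∀ w, w ≠ v → d v w = e v w)
    {j k : Fin 6} (hjk : j ≠ k) : d j k = e j k := by
  by_cases hj : j = u ∨ j = v
  · rcases hj with rfl | rfl
    exacts [hu k (Ne.symm hjk), hv k (Ne.symm hjk)]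
  by_cases hk : k = u ∨ k = v
  · rw [hd.comm hjk, he.comm hjk]
    rcases hk with rfl | rfl
    exacts [hu j hjk, hv j hjk]
  have hnd : [u, v, j, k].Nodup := by
    simp only [List.nodup_cons, List.mem_cons, List.not_mem_nil, or_false, not_or]
    grind
  by_cases hdjk : d j k = d u v
  · by_cases hejk : e j k = e u v
    · rw [hdjk, hejk, hu v (Ne.symm huv)]
    · exact he.apply_eq_of_eqOn_stars_of_ne hd (fun w hw => (hu w hw).symm)
        (fun w hw => (hv w hw).symm) hnd hejk
  · exact (hd.apply_eq_of_eqOn_stars_of_ne he hu hv hnd hdjk).symm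

end IsProperColouring

theorem isProperColouring_c : IsProperColouring c := by
  unfold IsProperColouring
  decide

set_option maxRecDepth 10000 in
set_option synthInstance.maxSize 10000 in
theorem exists_perm_c_stars_eq (r : Fin 6 → Fin 5) (hr5 : r 5 = c 0 5)
    (hinj : ∀ j k, j ≠ 0 → k ≠ 0 → j ≠ k → r j ≠ r k)
    (hstar : ∀ j, j ≠ 0 → j ≠ 5 → r j ≠ c 5 j)
    (hswap : ∀ j l, j ≠ 0 → l ≠ 0 → j ≠ 5 → l ≠ 5 → j ≠ l → r j = c 5 l → r l ≠ c 5 j) :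
    ∃ ψ : Equiv.Perm (Fin 6),
      (∀ w, w ≠ 5 → c (ψ 5) (ψ w) = c 5 w) ∧ ∀ j, j ≠ 0 → c (ψ 0) (ψ j) = r j := by
  revert r
  decide +kernel

theorem eq_c_comp_perm_of_star_eq {d : Fin 6 → Fin 6 → Fin 5} (hd : IsProperColouring d)
    (hd5 : ∀ w, w ≠ 5 → d 5 w = c 5 w) :
    ∃ ψ : Equiv.Perm (Fin 6), ∀ i j, i ≠ j → d i j = c (ψ i) (ψ j) := by
  obtain ⟨ψ, hψ5, hψ0⟩ := exists_perm_c_stars_eq (d 0)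
    ((hd.comm (by decide)).trans (hd5 0 (by decide)))
    (hd.2 0)
    (fun j hj0 hj5 => by
      rw [← hd5 j hj5]
      exact hd.apply_ne_apply_left (Ne.symm hj0) (Ne.symm hj5) (by decide))
    (fun j l hj0 hl0 hj5 hl5 hjl h => by
      rw [← hd5 j hj5]
      refine hd.apply_ne_of_apply_eq_swap ?_ (h.trans (hd5 l hl5).symm)
      simp only [List.nodup_cons, List.mem_cons, List.not_mem_nil, or_false, not_or]
      grind)
  refine ⟨ψ, fun i j hij => ?_⟩
  exact hd.eq_of_eqOn_two_stars (isProperColouring_c.comap ψ.injective)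
    (by decide : (5 : Fin 6) ≠ 0) (fun w hw => (hd5 w hw).trans (hψ5 w hw).symm)
    (fun w hw => (hψ0 w hw).symm) hij

theorem properColouring_unique (c' : Fin 6 → Fin 6 → Fin 5)
    (hsymm : ∀ i j : Fin 6, i ≠ j → c' i j = c' j i)
    (hproper : ∀ i j k : Fin 6, j ≠ i → k ≠ i → j ≠ k → c' i j ≠ c' i k) :
    ∃ (φ : Equiv.Perm (Fin 6)) (σ : Equiv.Perm (Fin 5)),
      ∀ i j : Fin 6, i ≠ j → c' (φ i) (φ j) = σ (c i j) := by
  have hc' : IsProperColouring c' := ⟨hsymm, hproper⟩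
  obtain ⟨σ, hσ⟩ := hc'.exists_perm_apply_eq rfl isProperColouring_c 5
  obtain ⟨ψ, hψ⟩ := eq_c_comp_perm_of_star_eq (hc'.map σ.symm.injective)
    (fun w hw => by simp only [Equiv.symm_apply_eq, hσ w hw])
  refine ⟨ψ.symm, σ, fun i j hij => ?_⟩
  simpa [Equiv.symm_apply_eq] using hψ _ _ (ψ.symm.injective.ne hij)
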